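/- arXiv:2006.03749 — 2 statements merged into one kernel-verified Lean document; each statement's English description precedes it below -/
import Mathlib

section
/- Pliss Lemma: Let A ≥ c₂ > c₁ > 0 and set ξ = (c₂ - c₁)/(A - c₁). If (a_i)_{1 ≤ i ≤ N} is a sequence of real numbers with a_i ≤ A for every i and (1/N)·∑_{j=1}^N a_j ≥ c₂, then there exist ℓ ≥ ξ·N and indices 1 ≤ n₁ < n₂ < ⋯ < n_ℓ ≤ N such that for each 1 ≤ i ≤ ℓ and every 0 ≤ n < n_i one has ∑_{j=n+1}^{n_i} a_j ≥ c₁·(n_i − n). -/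
/-!
Put `b j = a j - c₁` and `S n = b 1 + ⋯ + b n`. The `c₁`-Pliss times are exactly the weak record
times of `S`, i.e. the `n` with `S m ≤ S n` for all `m < n`. The running maximum of `S` starts at
`0`, grows only at record times, and each time by at most `A - c₁`, since `b j ≤ A - c₁`. As
`S N ≥ (c₂ - c₁) N`, there are at least `(c₂ - c₁) N / (A - c₁)` record times in `[1, N]`.
-/

open Finset

def IsWeakRecord {α : Type*} [LE α] (S : ℕ → α) (n : ℕ) : Prop :=
  ∀ m < n, S m ≤ S n

instance {α : Type*} [LE α] [DecidableLE α] (S : ℕ → α) : DecidablePred (IsWeakRecord S) :=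
  fun n => inferInstanceAs (Decidable (∀ m < n, S m ≤ S n))

theorem card_filter_Ioc_succ (p : ℕ → Prop) [DecidablePred p] (m n : ℕ) (hmn : m ≤ n) :
    #{k ∈ Ioc m (n + 1) | p k} = #{k ∈ Ioc m n | p k} + if p (n + 1) then 1 else 0 := by
  simp only [card_filter, sum_Ioc_succ_top hmn]

section Counting

variable {α : Type*} [AddCommMonoid α] [LinearOrder α] [IsOrderedAddMonoid α]

theorem le_card_filter_isWeakRecord_nsmul {S : ℕ → α} {K : α} {N : ℕ} (hK : 0 ≤ K)
    (h0 : S 0 ≤ 0) (hstep : ∀ n < N, S (n + 1) ≤ S n + K) :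
    ∀ n ≤ N, S n ≤ #{m ∈ Ioc 0 n | IsWeakRecord S m} • K := by
  intro n
  induction n using Nat.strong_induction_on with | _ n ih => ?_
  intro hnN
  rcases n with _ | n
  · simpa using h0
  by_cases hrec : IsWeakRecord S (n + 1)
  · calc S (n + 1) ≤ S n + K := hstep n hnN
      _ ≤ #{m ∈ Ioc 0 n | IsWeakRecord S m} • K + K := by
        gcongr
        exact ih n n.lt_succ_self (by omega)
      _ = #{m ∈ Ioc 0 (n + 1) | IsWeakRecord S m} • K := by
        rw [card_filter_Ioc_succ _ 0 n n.zero_le, if_pos hrec, succ_nsmul]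
  · obtain ⟨m, hmn, hlt⟩ : ∃ m < n + 1, S (n + 1) < S m := by
      simpa [IsWeakRecord] using hrec
    calc S (n + 1) ≤ S m := hlt.le
      _ ≤ #{m' ∈ Ioc 0 m | IsWeakRecord S m'} • K := ih m hmn (by omega)
      _ ≤ #{m ∈ Ioc 0 (n + 1) | IsWeakRecord S m} • K := by
        gcongr

end Counting

theorem sum_Ioc_nonneg_of_isWeakRecord {α : Type*} [AddCommGroup α] [PartialOrder α]
    [IsOrderedAddMonoid α] {f : ℕ → α} {m n : ℕ}
    (hn : IsWeakRecord (fun k => ∑ j ∈ Ioc 0 k, f j) n) (hmn : m < n) :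
    0 ≤ ∑ j ∈ Ioc m n, f j := by
  have h : ∑ j ∈ Ioc 0 m, f j ≤ ∑ j ∈ Ioc 0 n, f j := hn m hmn
  rw [← sum_Ioc_consecutive f (Nat.zero_le m) hmn.le] at h
  exact (le_add_iff_nonneg_right _).mp h

theorem pliss_lemma_general (A c₁ c₂ : ℝ) (hc₁₂ : c₁ < c₂) (hc₂A : c₂ ≤ A)
    (N : ℕ) (a : ℕ → ℝ)
    (ha : ∀ i, 1 ≤ i → i ≤ N → a i ≤ A)
    (hsum : c₂ * N ≤ ∑ j ∈ Finset.Icc 1 N, a j) :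
    ∃ ns : Finset ℕ, ns ⊆ Finset.Icc 1 N ∧
      ((c₂ - c₁) / (A - c₁)) * N ≤ (ns.card : ℝ) ∧
      ∀ ni ∈ ns, ∀ n < ni, c₁ * ((ni : ℝ) - (n : ℝ)) ≤ ∑ j ∈ Finset.Icc (n + 1) ni, a j := by
  have hIoc : ∀ m n : ℕ, Icc (m + 1) n = Ioc m n := Icc_add_one_left_eq_Ioc
  have hsum_sub : ∀ m n, m ≤ n →
      ∑ j ∈ Ioc m n, (a j - c₁) = ∑ j ∈ Ioc m n, a j - c₁ * (n - m) := by
    intro m n hmn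
    rw [sum_sub_distrib, sum_const, Nat.card_Ioc, nsmul_eq_mul, Nat.cast_sub hmn, mul_comm]
  set S : ℕ → ℝ := fun n => ∑ j ∈ Ioc 0 n, (a j - c₁)
  have hK : 0 < A - c₁ := by linarith
  refine ⟨{n ∈ Icc 1 N | IsWeakRecord S n}, filter_subset _ _, ?_, ?_⟩
  · rw [show Icc 1 N = Ioc 0 N from hIoc 0 N] at hsum ⊢
    have hSN : (c₂ - c₁) * N ≤ S N := by
      have hSN_eq := hsum_sub 0 N (Nat.zero_le N)
      simp only [Nat.cast_zero, sub_zero] at hSN_eq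
      simp only [S, hSN_eq]
      linarith
    have hstep : ∀ n < N, S (n + 1) ≤ S n + (A - c₁) := by
      intro n hn
      simp only [S, sum_Ioc_succ_top (Nat.zero_le n)]
      linarith [ha (n + 1) (by omega) hn]
    have hcount := le_card_filter_isWeakRecord_nsmul hK.le (by simp [S]) hstep N le_rfl
    rw [nsmul_eq_mul] at hcount
    rw [div_mul_eq_mul_div, div_le_iff₀ hK]
    linarith
  · intro ni hni n hn
    rw [hIoc, ← sub_nonneg, ← hsum_sub n ni hn.le]
    exact sum_Ioc_nonneg_of_isWeakRecord (mem_filter.mp hni).2 hn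

/-- **Pliss Lemma.** -/
theorem pliss_lemma (A c₁ c₂ : ℝ) (hc₁ : 0 < c₁) (hc₁₂ : c₁ < c₂) (hc₂A : c₂ ≤ A)
    (N : ℕ) (a : ℕ → ℝ)
    (ha : ∀ i, 1 ≤ i → i ≤ N → a i ≤ A)
    (hsum : c₂ * N ≤ ∑ j ∈ Finset.Icc 1 N, a j) :
    ∃ ns : Finset ℕ, ns ⊆ Finset.Icc 1 N ∧
      ((c₂ - c₁) / (A - c₁)) * N ≤ (ns.card : ℝ) ∧
      ∀ ni ∈ ns, ∀ n < ni, c₁ * ((ni : ℝ) - (n : ℝ)) ≤ ∑ j ∈ Finset.Icc (n + 1) ni, a j :=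
  pliss_lemma_general A c₁ c₂ hc₁₂ hc₂A N a ha hsum
end

section
/- Summability of measures of shrinking annuli: Let r₀ > 0, ϑ a finite Borel measure on [0, r₀], and 0 < a < 1. Then for Lebesgue-almost every r ∈ [0, r₀], ∑_{k=0}^{∞} ϑ([r − a^k, r + a^k]) < ∞. -/
open MeasureTheory Metric ENNReal

/-! By Tonelli, `∫ ϑ(B(r, ε)) dr = ∫ vol(B(s, ε)) dϑ(s) = 2ε ϑ(ℝ)`. Summing over `ε = a^k` gives
`∫ ∑ₖ ϑ(B(r, aᵏ)) dr = 2ϑ(ℝ)/(1 - a) < ∞`, so the series is finite for almost every `r`. -/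

section ClosedBall

variable {α : Type*} [PseudoMetricSpace α] [MeasurableSpace α] [OpensMeasurableSpace α]
  [SecondCountableTopology α]

theorem measurableSet_dist_le (ε : ℝ) : MeasurableSet {p : α × α | dist p.2 p.1 ≤ ε} :=
  (isClosed_le (continuous_snd.dist continuous_fst) continuous_const).measurableSet

theorem measurable_measure_closedBall (ν : Measure α) [SFinite ν] (ε : ℝ) :
    Measurable fun x => ν (closedBall x ε) :=
  measurable_measure_prodMk_left (measurableSet_dist_le ε)

theorem lintegral_measure_closedBall_comm (μ ν : Measure α) [SFinite μ] [SFinite ν] (ε : ℝ) :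
    ∫⁻ x, ν (closedBall x ε) ∂μ = ∫⁻ y, μ (closedBall y ε) ∂ν :=
  calc ∫⁻ x, ν (closedBall x ε) ∂μ = μ.prod ν {p | dist p.2 p.1 ≤ ε} :=
        (Measure.prod_apply (measurableSet_dist_le ε)).symm
    _ = ∫⁻ y, μ (closedBall y ε) ∂ν := by
        rw [Measure.prod_apply_symm (measurableSet_dist_le ε)]
        simp only [closedBall, Set.preimage_ofPred_eq, dist_comm]

end ClosedBall

theorem Real.lintegral_measure_closedBall (ν : Measure ℝ) [SFinite ν] (ε : ℝ) :
    ∫⁻ x, ν (closedBall x ε) = ENNReal.ofReal (2 * ε) * ν Set.univ := by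
  simp_rw [lintegral_measure_closedBall_comm volume ν, Real.volume_closedBall, lintegral_const]

theorem lintegral_tsum_measure_closedBall_geometric_ne_top (ν : Measure ℝ) [IsFiniteMeasure ν]
    {a : ℝ} (ha0 : 0 < a) (ha1 : a < 1) :
    ∫⁻ x, ∑' k : ℕ, ν (closedBall x (a ^ k)) ≠ ∞ := by
  rw [lintegral_tsum fun k => (measurable_measure_closedBall ν _).aemeasurable]
  simp_rw [Real.lintegral_measure_closedBall, ENNReal.tsum_mul_right,
    ENNReal.ofReal_mul zero_le_two, ENNReal.tsum_mul_left,
    ENNReal.ofReal_pow ha0.le, ENNReal.tsum_geometric]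
  refine ENNReal.mul_ne_top (ENNReal.mul_ne_top ofReal_ne_top ?_) (measure_ne_top ν _)
  exact ENNReal.inv_ne_top.2 (tsub_pos_iff_lt.2 (ENNReal.ofReal_lt_one.2 ha1)).ne'

theorem ae_summable_measure_closedBall_geometric (ν : Measure ℝ) [IsFiniteMeasure ν]
    {a : ℝ} (ha0 : 0 < a) (ha1 : a < 1) :
    ∀ᵐ x, Summable fun k : ℕ => (ν (closedBall x (a ^ k))).toReal := by
  filter_upwards [ae_lt_top (Measurable.tsum fun k => measurable_measure_closedBall ν _)
    (lintegral_tsum_measure_closedBall_geometric_ne_top ν ha0 ha1)] with x hx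
  exact ENNReal.summable_toReal hx.ne

theorem annuli_measures_summable_general (r₀ : ℝ)
    (ϑ : Measure ℝ) [IsFiniteMeasure ϑ]
    (a : ℝ) (ha0 : 0 < a) (ha1 : a < 1) :
    ∀ᵐ r ∂(volume.restrict (Set.Icc 0 r₀)),
      Summable (fun k : ℕ => (ϑ (Set.Icc (r - a ^ k) (r + a ^ k))).toReal) := by
  simpa only [Real.closedBall_eq_Icc] using
    ae_restrict_of_ae (ae_summable_measure_closedBall_geometric ϑ ha0 ha1)

/-- **Summability of measures of shrinking annuli.** If `ϑ` is a finite Borel measure on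
`[0, r₀]` and `0 < a < 1`, then for Lebesgue-almost every `r ∈ [0, r₀]` the series
`∑_k ϑ([r − a^k, r + a^k])` converges. -/
theorem annuli_measures_summable (r₀ : ℝ) (hr₀ : 0 < r₀)
    (ϑ : Measure ℝ) [IsFiniteMeasure ϑ] (hsupp : ϑ (Set.Icc 0 r₀)ᶜ = 0)
    (a : ℝ) (ha0 : 0 < a) (ha1 : a < 1) :
    ∀ᵐ r ∂(volume.restrict (Set.Icc 0 r₀)),
      Summable (fun k : ℕ => (ϑ (Set.Icc (r - a ^ k) (r + a ^ k))).toReal) :=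
  annuli_measures_summable_general r₀ ϑ a ha0 ha1
end
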